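/- Let R and S be finite fields such that the commuting graphs of Tr(R) and Tr(S) are isomorphic. Then R and S are isomorphic as rings. -/

import Mathlib

open Matrix

/-- The ring of 2×2 upper triangular matrices over `R`. -/
def Tri (R : Type*) [CommRing R] : Subring (Matrix (Fin 2) (Fin 2) R) where
  carrier := {A | A 1 0 = 0}
  mul_mem' := by
    intro a b ha hb
    simp only [Set.mem_setOf_eq] at *
    simp [Matrix.mul_apply, Fin.sum_univ_two, ha, hb]
  one_mem' := by simp [Matrix.one_apply]
  add_mem' := by
    intro a b ha hb
    simp_all [Matrix.add_apply]
  zero_mem' := by simp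
  neg_mem' := by
    intro a ha
    simp_all

/-- The commuting graph of a ring `T`: vertices are the noncentral elements,
two distinct vertices are adjacent iff they commute. -/
def commGraph (T : Type*) [Ring T] : SimpleGraph {x : T // x ∉ Set.center T} where
  Adj a b := a ≠ b ∧ (a : T) * b = b * a
  symm := by
    constructor
    rintro a b ⟨h1, h2⟩
    exact ⟨h1.symm, h2.symm⟩
  loopless := by constructor; rintro a ⟨h, _⟩; exact h rfl

/-!
A graph isomorphism is in particular a bijection of vertex sets, so `Tr(R)` and `Tr(S)` have
equally many noncentral elements. The center of `Tr(R)` consists of the scalar matrices, so for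
`q = |R|` this count is `q³ - q`; as `n ↦ n³ - n` is injective on positive integers, `|R| = |S|`,
and finite fields of the same order are isomorphic.
-/

namespace Tri

variable {R : Type*} [CommRing R]

theorem mem_iff (A : Matrix (Fin 2) (Fin 2) R) : A ∈ Tri R ↔ A 1 0 = 0 := Iff.rfl

def equivProd : Tri R ≃ R × R × R where
  toFun A := (A.1 0 0, A.1 0 1, A.1 1 1)
  invFun x := ⟨!![x.1, x.2.1; 0, x.2.2], by simp [mem_iff]⟩
  left_inv := by
    rintro ⟨A, hA : A 1 0 = 0⟩
    ext i j
    fin_cases i <;> fin_cases j <;> simp [hA]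
  right_inv := by rintro ⟨a, b, c⟩; simp

theorem mem_center_iff (x : Tri R) :
    x ∈ Set.center (Tri R) ↔ x.1 0 1 = 0 ∧ x.1 0 0 = x.1 1 1 := by
  have hx : x.1 1 0 = 0 := x.2
  rw [Semigroup.mem_center_iff]
  constructor
  · intro hc
    have h := congrArg (· 0 1) (Subtype.ext_iff.mp (hc ⟨!![0, 1; 0, 0], by simp [mem_iff]⟩))
    have h' := congrArg (· 0 1) (Subtype.ext_iff.mp (hc ⟨!![1, 0; 0, 0], by simp [mem_iff]⟩))
    simp [Matrix.mul_apply, Fin.sum_univ_two] at h h'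
    exact ⟨by simpa using h', h.symm⟩
  · rintro ⟨h01, hdiag⟩ g
    have hg : g.1 1 0 = 0 := g.2
    ext i j
    fin_cases i <;> fin_cases j <;>
      simp [Matrix.mul_apply, Fin.sum_univ_two, h01, hdiag, hg, hx, mul_comm]

def centerEquiv : Set.center (Tri R) ≃ R where
  toFun x := x.1.1 0 0
  invFun a := ⟨⟨!![a, 0; 0, a], by simp [mem_iff]⟩, by simp [mem_center_iff]⟩
  left_inv := by
    rintro ⟨x, hx⟩
    obtain ⟨h01, hdiag⟩ := (mem_center_iff x).mp hx
    have h10 : x.1 1 0 = 0 := x.2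
    ext i j
    fin_cases i <;> fin_cases j <;> simp [h01, hdiag, h10]
  right_inv a := rfl

theorem card_eq : Nat.card (Tri R) = Nat.card R ^ 3 := by
  rw [Nat.card_congr equivProd, Nat.card_prod, Nat.card_prod]
  ring

theorem card_center : Nat.card (Set.center (Tri R)) = Nat.card R :=
  Nat.card_congr centerEquiv

theorem card_noncentral_add_card [Finite R] :
    Nat.card {x : Tri R // x ∉ Set.center (Tri R)} + Nat.card R = Nat.card R ^ 3 := by
  classical
  have : Finite (Tri R) := .of_equiv _ equivProd.symm
  rw [← card_eq, ← card_center (R := R), add_comm, ← Nat.card_sum]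
  exact Nat.card_congr (Equiv.sumCompl (· ∈ Set.center (Tri R)))

end Tri

theorem Nat.pow_three_add_lt_pow_three_add {a b : ℕ} (ha : 0 < a) (hab : a < b) :
    a ^ 3 + b < b ^ 3 + a := by
  zify at *
  nlinarith [mul_pos (sub_pos.mpr hab) (by nlinarith : (0 : ℤ) < a ^ 2 + a * b + b ^ 2 - 1)]

theorem Nat.eq_of_pow_three_add_eq {a b : ℕ} (ha : 0 < a) (hb : 0 < b)
    (h : a ^ 3 + b = b ^ 3 + a) : a = b := by
  rcases lt_trichotomy a b with hab | rfl | hab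
  · exact absurd h (pow_three_add_lt_pow_three_add ha hab).ne
  · rfl
  · exact absurd h (pow_three_add_lt_pow_three_add hb hab).ne'

/-- Remark 2.8: if `R` and `S` are finite fields whose rings of 2×2 upper
triangular matrices have isomorphic commuting graphs, then `R ≅ S`. -/
theorem ringIso_of_commGraph_iso {R S : Type*} [Field R] [Fintype R]
    [Field S] [Fintype S]
    (h : Nonempty (commGraph (Tri R) ≃g commGraph (Tri S))) :
    Nonempty (R ≃+* S) := by
  obtain ⟨iso⟩ := h
  have hcard : Nat.card {x : Tri R // x ∉ Set.center (Tri R)} =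
      Nat.card {x : Tri S // x ∉ Set.center (Tri S)} := Nat.card_congr iso.toEquiv
  have hRS : Nat.card R ^ 3 + Nat.card S = Nat.card S ^ 3 + Nat.card R := by
    rw [← Tri.card_noncentral_add_card (R := R), ← Tri.card_noncentral_add_card (R := S), hcard]
    ring
  have horder : Fintype.card R = Fintype.card S := by
    simpa only [Nat.card_eq_fintype_card] using
      Nat.eq_of_pow_three_add_eq Nat.card_pos Nat.card_pos hRS
  exact ⟨FiniteField.ringEquivOfCardEq horder⟩
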